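/- arXiv:1811.02767 — 4 statements merged into one kernel-verified Lean document; each statement's English description precedes it below -/
import Mathlib

section
/- Let V be a real inner product space, ξ ∈ V a unit vector, η(X) = ⟪X, ξ⟫, and let W be a finite-dimensional subspace of V with ξ ∈ W; let P_W denote orthogonal projection onto W. Let φ : V → V be linear with ⟪φ a, b⟫ = −⟪a, φ b⟫ for all a, b ∈ V and ⟪φ X, φ Y⟫ = ⟪X, Y⟫ − η(X)η(Y) for all X, Y ∈ W. For X ∈ W set T X = P_W(φ X) and F X = φ X − T X. If there is θ ∈ ℝ such that T(T X) = cos²θ · (−X + η(X)·ξ) for all X ∈ W, then ⟪F X, F Y⟫ = sin²θ · (⟪X, Y⟫ − η(X)η(Y)) for all X, Y ∈ W. -/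
open scoped RealInnerProductSpace

/-!
`F X` is orthogonal to `W`, so `⟪FX, FY⟫ = ⟪φX, φY⟫ − ⟪TX, TY⟫`. Since `φ` is skew, so is its
compression `T` to `W`; hence `⟪TX, TY⟫ = −⟪X, T²Y⟫ = cos²θ (⟪X, Y⟫ − η(X)η(Y))`, and the claim
follows from the metric condition on `φ` and `1 − cos²θ = sin²θ`.
-/

namespace Submodule

theorem inner_sub_starProjection_sub_starProjection {𝕜 E : Type*} [RCLike 𝕜]
    [NormedAddCommGroup E] [InnerProductSpace 𝕜 E] (K : Submodule 𝕜 E)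
    [K.HasOrthogonalProjection] (x y : E) :
    inner 𝕜 (x - K.starProjection x) (y - K.starProjection y) =
      inner 𝕜 x y - inner 𝕜 (K.starProjection x) (K.starProjection y) := by
  have horth : inner 𝕜 (x - K.starProjection x) (K.starProjection y) = 0 :=
    K.starProjection_inner_eq_zero x _ (K.starProjection_apply_mem y)
  have hsymm : inner 𝕜 (K.starProjection x) y =
      inner 𝕜 (K.starProjection x) (K.starProjection y) := by
    rw [K.inner_starProjection_left_eq_right, K.inner_starProjection_left_eq_right x,
      K.starProjection_eq_self_iff.mpr (K.starProjection_apply_mem y)]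
  rw [inner_sub_right, horth, sub_zero, inner_sub_left, hsymm]

variable {V : Type*} [NormedAddCommGroup V] [InnerProductSpace ℝ V]

theorem inner_starProjection_apply_of_skew (K : Submodule ℝ V) [K.HasOrthogonalProjection]
    {φ : V → V} (hφ : ∀ a b : V, ⟪φ a, b⟫ = -⟪a, φ b⟫) {x z : V} (hx : x ∈ K) (hz : z ∈ K) :
    ⟪K.starProjection (φ x), z⟫ = -⟪x, K.starProjection (φ z)⟫ := by
  rw [K.inner_starProjection_left_eq_right, K.starProjection_eq_self_iff.mpr hz, hφ,
    ← K.inner_starProjection_left_eq_right, K.starProjection_eq_self_iff.mpr hx]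

end Submodule

theorem slant_F_inner_general {V : Type*} [NormedAddCommGroup V] [InnerProductSpace ℝ V]
    (ξ : V) (W : Submodule ℝ V) [FiniteDimensional ℝ W]
    (φ : V →ₗ[ℝ] V)
    (hskew : ∀ a b : V, ⟪φ a, b⟫ = -⟪a, φ b⟫)
    (hmet : ∀ X Y : V, X ∈ W → Y ∈ W → ⟪φ X, φ Y⟫ = ⟪X, Y⟫ - ⟪X, ξ⟫ * ⟪Y, ξ⟫)
    (θ : ℝ)
    (hT : ∀ X : V, X ∈ W →
      ((Submodule.orthogonalProjectionOnto W (φ ((Submodule.orthogonalProjectionOnto W (φ X) : V))) : V)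
        = Real.cos θ ^ 2 • (-X + ⟪X, ξ⟫ • ξ))) :
    ∀ X Y : V, X ∈ W → Y ∈ W →
      ⟪φ X - (Submodule.orthogonalProjectionOnto W (φ X) : V), φ Y - (Submodule.orthogonalProjectionOnto W (φ Y) : V)⟫
        = Real.sin θ ^ 2 * (⟪X, Y⟫ - ⟪X, ξ⟫ * ⟪Y, ξ⟫) := by
  intro X Y hX hY
  simp only [Submodule.coe_orthogonalProjectionOnto_apply] at hT ⊢
  have hTT : ⟪W.starProjection (φ X), W.starProjection (φ Y)⟫ =
      Real.cos θ ^ 2 * (⟪X, Y⟫ - ⟪X, ξ⟫ * ⟪Y, ξ⟫) := by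
    rw [W.inner_starProjection_apply_of_skew hskew hX (W.starProjection_apply_mem _), hT Y hY,
      inner_smul_right, inner_add_right, inner_neg_right, inner_smul_right, real_inner_comm ξ X]
    ring
  rw [W.inner_sub_starProjection_sub_starProjection, hmet X Y hX hY, hTT, Real.sin_sq]
  ring

/-- For a pointwise slant subspace `W` with slant angle `θ`, characterized by
`T² = cos²θ (−Id + η ⊗ ξ)`, one has `⟪FX, FY⟫ = sin²θ (⟪X,Y⟫ − η(X)η(Y))`,
where `F X = φ X − P_W (φ X)`. -/
theorem slant_F_inner {V : Type*} [NormedAddCommGroup V] [InnerProductSpace ℝ V]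
    (ξ : V) (hξ : ‖ξ‖ = 1) (W : Submodule ℝ V) [FiniteDimensional ℝ W] (hξW : ξ ∈ W)
    (φ : V →ₗ[ℝ] V)
    (hskew : ∀ a b : V, ⟪φ a, b⟫ = -⟪a, φ b⟫)
    (hmet : ∀ X Y : V, X ∈ W → Y ∈ W → ⟪φ X, φ Y⟫ = ⟪X, Y⟫ - ⟪X, ξ⟫ * ⟪Y, ξ⟫)
    (θ : ℝ)
    (hT : ∀ X : V, X ∈ W →
      ((Submodule.orthogonalProjectionOnto W (φ ((Submodule.orthogonalProjectionOnto W (φ X) : V))) : V)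
        = Real.cos θ ^ 2 • (-X + ⟪X, ξ⟫ • ξ))) :
    ∀ X Y : V, X ∈ W → Y ∈ W →
      ⟪φ X - (Submodule.orthogonalProjectionOnto W (φ X) : V), φ Y - (Submodule.orthogonalProjectionOnto W (φ Y) : V)⟫
        = Real.sin θ ^ 2 * (⟪X, Y⟫ - ⟪X, ξ⟫ * ⟪Y, ξ⟫) :=
  slant_F_inner_general ξ W φ hskew hmet θ hT
end

section
/- Let V be a real inner product space, ξ ∈ V a unit vector, η(X) = ⟪X, ξ⟫, and let W be a finite-dimensional subspace of V with ξ ∈ W; let P_W denote orthogonal projection onto W. Let φ : V → V be linear with φ(φ X) = −X + η(X)·ξ for all X ∈ V. For X ∈ W set T X = P_W(φ X) and F X = φ X − T X. If there is θ ∈ ℝ such that T(T X) = cos²θ · (−X + η(X)·ξ) for all X ∈ W, then for every X ∈ W the tangential component of φ(F X) satisfies P_W(φ(F X)) = sin²θ · (−X + η(X)·ξ). -/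
open scoped RealInnerProductSpace

theorem slant_tF_general {V : Type*} [NormedAddCommGroup V] [InnerProductSpace ℝ V]
    (ξ : V) (W : Submodule ℝ V) [FiniteDimensional ℝ W] (hξW : ξ ∈ W)
    (φ : V →ₗ[ℝ] V)
    (hφ2 : ∀ X : V, φ (φ X) = -X + ⟪X, ξ⟫ • ξ)
    (θ : ℝ)
    (hT : ∀ X : V, X ∈ W →
      ((Submodule.orthogonalProjection W (φ ((Submodule.orthogonalProjection W (φ X) : V))) : V)
        = Real.cos θ ^ 2 • (-X + ⟪X, ξ⟫ • ξ))) :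
    ∀ X : V, X ∈ W →
      (Submodule.orthogonalProjection W (φ (φ X - (Submodule.orthogonalProjection W (φ X) : V))) : V)
        = Real.sin θ ^ 2 • (-X + ⟪X, ξ⟫ • ξ) := by
  intro X hX
  have hφφX_mem : φ (φ X) ∈ W := hφ2 X ▸ W.add_mem (W.neg_mem hX) (W.smul_mem _ hξW)
  have htφφX : (W.orthogonalProjectionOnto (φ (φ X)) : V) = -X + ⟪X, ξ⟫ • ξ := by
    rw [Submodule.orthogonalProjectionOnto_mem_subspace_eq_self ⟨_, hφφX_mem⟩]
    exact hφ2 X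
  rw [map_sub, map_sub, Submodule.coe_sub, htφφX, hT X hX, Real.sin_sq]
  module

/-- For a pointwise slant subspace `W` with slant angle `θ`, the tangential component of
`φ (F X)` satisfies `t(FX) = sin²θ (−X + η(X) ξ)`, where `T X = P_W (φ X)` and
`F X = φ X − T X`. -/
theorem slant_tF {V : Type*} [NormedAddCommGroup V] [InnerProductSpace ℝ V]
    (ξ : V) (hξ : ‖ξ‖ = 1) (W : Submodule ℝ V) [FiniteDimensional ℝ W] (hξW : ξ ∈ W)
    (φ : V →ₗ[ℝ] V)
    (hφ2 : ∀ X : V, φ (φ X) = -X + ⟪X, ξ⟫ • ξ)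
    (θ : ℝ)
    (hT : ∀ X : V, X ∈ W →
      ((Submodule.orthogonalProjection W (φ ((Submodule.orthogonalProjection W (φ X) : V))) : V)
        = Real.cos θ ^ 2 • (-X + ⟪X, ξ⟫ • ξ))) :
    ∀ X : V, X ∈ W →
      (Submodule.orthogonalProjection W (φ (φ X - (Submodule.orthogonalProjection W (φ X) : V))) : V)
        = Real.sin θ ^ 2 • (-X + ⟪X, ξ⟫ • ξ) :=
  slant_tF_general ξ W hξW φ hφ2 θ hT
end

section
/- Let V be a real inner product space, ξ ∈ V a unit vector, η(X) = ⟪X, ξ⟫, and let W be a finite-dimensional subspace of V with ξ ∈ W; let P_W denote orthogonal projection onto W. Let φ : V → V be linear with φ(φ X) = −X + η(X)·ξ for all X ∈ V. For X ∈ W set T X = P_W(φ X) and F X = φ X − T X. Then for every X ∈ W the normal component of φ(F X) satisfies φ(F X) − P_W(φ(F X)) = −F(T X). -/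
open scoped RealInnerProductSpace

theorem Submodule.sub_starProjection_sub_of_mem {𝕜 E : Type*} [RCLike 𝕜] [NormedAddCommGroup E]
    [InnerProductSpace 𝕜 E] (K : Submodule 𝕜 E) [K.HasOrthogonalProjection] {w : E}
    (hw : w ∈ K) (v : E) :
    (w - v) - K.starProjection (w - v) = -(v - K.starProjection v) := by
  rw [map_sub, K.starProjection_eq_self_iff.mpr hw]
  abel

theorem slant_fF_eq_neg_FT_general {V : Type*} [NormedAddCommGroup V] [InnerProductSpace ℝ V]
    (ξ : V) (W : Submodule ℝ V) [FiniteDimensional ℝ W] (hξW : ξ ∈ W)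
    (φ : V →ₗ[ℝ] V)
    (hφ2 : ∀ X : V, φ (φ X) = -X + ⟪X, ξ⟫ • ξ) :
    ∀ X : V, X ∈ W →
      φ (φ X - (W.orthogonalProjection (φ X) : V))
          - (W.orthogonalProjection (φ (φ X - (W.orthogonalProjection (φ X) : V))) : V)
        = -(φ ((W.orthogonalProjection (φ X) : V))
            - (W.orthogonalProjection (φ ((W.orthogonalProjection (φ X) : V))) : V)) := by
  intro X hX
  have hφφX : φ (φ X) ∈ W := by
    rw [hφ2]
    exact W.add_mem (W.neg_mem hX) (W.smul_mem _ hξW)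
  simp only [← Submodule.starProjection_apply]
  rw [map_sub φ (φ X)]
  exact W.sub_starProjection_sub_of_mem hφφX _

/-- For a subspace `W` of an almost contact structure, the normal component of `φ (F X)`
satisfies `f(FX) = −F(TX)`, where `T X = P_W (φ X)` and `F X = φ X − T X`. -/
theorem slant_fF_eq_neg_FT {V : Type*} [NormedAddCommGroup V] [InnerProductSpace ℝ V]
    (ξ : V) (hξ : ‖ξ‖ = 1) (W : Submodule ℝ V) [FiniteDimensional ℝ W] (hξW : ξ ∈ W)
    (φ : V →ₗ[ℝ] V)
    (hφ2 : ∀ X : V, φ (φ X) = -X + ⟪X, ξ⟫ • ξ) :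
    ∀ X : V, X ∈ W →
      φ (φ X - (W.orthogonalProjection (φ X) : V))
          - (W.orthogonalProjection (φ (φ X - (W.orthogonalProjection (φ X) : V))) : V)
        = -(φ ((W.orthogonalProjection (φ X) : V))
            - (W.orthogonalProjection (φ ((W.orthogonalProjection (φ X) : V))) : V)) :=
  slant_fF_eq_neg_FT_general ξ W hξW φ hφ2
end

section
/- Let V be a real inner product space, ξ ∈ V a unit vector, η(X) = ⟪X, ξ⟫, and let W be a finite-dimensional subspace of V with ξ ∈ W; let P_W denote orthogonal projection onto W. Let φ : V → V be linear with ⟪φ a, b⟫ = −⟪a, φ b⟫ for all a, b ∈ V and ⟪φ X, φ Y⟫ = ⟪X, Y⟫ − η(X)η(Y) for all X, Y ∈ W, and suppose there is θ ∈ ℝ with P_W(φ(P_W(φ X))) = cos²θ · (−X + η(X)·ξ) for all X ∈ W. Then for every X ∈ W with ⟪X, ξ⟫ = 0 one has ‖P_W(φ X)‖ = |cos θ| · ‖φ X‖; in particular, for every nonzero such X the angle between φ X and the subspace W is the same. -/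
open scoped RealInnerProductSpace

/- For `X ∈ W` and `T = P_W ∘ φ`, skew-symmetry of `φ` and self-adjointness of `P_W` give
`‖T X‖² = ⟪φ X, T X⟫ = -⟪X, φ (T X)⟫ = -⟪X, T² X⟫`. When `X ⊥ ξ` the hypothesis on `T²` turns
this into `cos²θ ‖X‖²`, while the metric condition gives `‖φ X‖² = ‖X‖²`; take square roots. -/

theorem norm_sq_orthogonalProjectionOnto_of_skew {V : Type*} [NormedAddCommGroup V]
    [InnerProductSpace ℝ V] {K : Submodule ℝ V} [K.HasOrthogonalProjection] {φ : V →ₗ[ℝ] V}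
    (hskew : ∀ a b : V, ⟪φ a, b⟫ = -⟪a, φ b⟫) {X : V} (hX : X ∈ K) :
    ‖(K.orthogonalProjectionOnto (φ X) : V)‖ ^ 2 =
      -⟪X, K.orthogonalProjectionOnto (φ (K.orthogonalProjectionOnto (φ X)))⟫ := by
  set p := K.orthogonalProjectionOnto (φ X)
  calc ‖(p : V)‖ ^ 2 = ⟪φ X, p⟫ := by
        rw [← real_inner_self_eq_norm_sq, ← K.coe_inner]
        exact K.inner_orthogonalProjectionOnto_eq_of_mem_right p (φ X)
    _ = -⟪X, φ p⟫ := hskew X p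
    _ = -⟪X, K.orthogonalProjectionOnto (φ p)⟫ := by
        rw [← K.inner_orthogonalProjectionOnto_eq_of_mem_left ⟨X, hX⟩ (φ p), K.coe_inner]

theorem slant_angle_constant_general {V : Type*} [NormedAddCommGroup V] [InnerProductSpace ℝ V]
    (ξ : V) (W : Submodule ℝ V) [FiniteDimensional ℝ W]
    (φ : V →ₗ[ℝ] V)
    (hskew : ∀ a b : V, ⟪φ a, b⟫ = -⟪a, φ b⟫)
    (hmet : ∀ X Y : V, X ∈ W → Y ∈ W → ⟪φ X, φ Y⟫ = ⟪X, Y⟫ - ⟪X, ξ⟫ * ⟪Y, ξ⟫)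
    (θ : ℝ)
    (hT : ∀ X : V, X ∈ W →
      ((Submodule.orthogonalProjectionOnto W (φ ((Submodule.orthogonalProjectionOnto W (φ X) : V))) : V)
        = Real.cos θ ^ 2 • (-X + ⟪X, ξ⟫ • ξ))) :
    ∀ X : V, X ∈ W → ⟪X, ξ⟫ = 0 →
      ‖(Submodule.orthogonalProjectionOnto W (φ X) : V)‖ = |Real.cos θ| * ‖φ X‖ := by
  intro X hX hXξ
  have hproj : ‖(W.orthogonalProjectionOnto (φ X) : V)‖ ^ 2 = Real.cos θ ^ 2 * ‖X‖ ^ 2 := by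
    rw [norm_sq_orthogonalProjectionOnto_of_skew hskew hX, hT X hX, hXξ, zero_smul, add_zero,
      real_inner_smul_right, inner_neg_right, real_inner_self_eq_norm_sq]
    ring
  have hφ : ‖φ X‖ ^ 2 = ‖X‖ ^ 2 := by
    rw [← real_inner_self_eq_norm_sq, ← real_inner_self_eq_norm_sq, hmet X X hX hX, hXξ]
    ring
  refine (pow_left_inj₀ (norm_nonneg _) (by positivity) two_ne_zero).1 ?_
  rw [hproj, mul_pow, sq_abs, hφ]

/-- If `T² = cos²θ (−Id + η ⊗ ξ)` on a subspace `W` containing the unit vector `ξ`, then for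
every `X ∈ W` orthogonal to `ξ` one has `‖P_W (φ X)‖ = |cos θ| ‖φ X‖`; in particular the
(Wirtinger) angle between `φ X` and `W` is the same for all nonzero such `X`. -/
theorem slant_angle_constant {V : Type*} [NormedAddCommGroup V] [InnerProductSpace ℝ V]
    (ξ : V) (hξ : ‖ξ‖ = 1) (W : Submodule ℝ V) [FiniteDimensional ℝ W] (hξW : ξ ∈ W)
    (φ : V →ₗ[ℝ] V)
    (hskew : ∀ a b : V, ⟪φ a, b⟫ = -⟪a, φ b⟫)
    (hmet : ∀ X Y : V, X ∈ W → Y ∈ W → ⟪φ X, φ Y⟫ = ⟪X, Y⟫ - ⟪X, ξ⟫ * ⟪Y, ξ⟫)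
    (θ : ℝ)
    (hT : ∀ X : V, X ∈ W →
      ((Submodule.orthogonalProjectionOnto W (φ ((Submodule.orthogonalProjectionOnto W (φ X) : V))) : V)
        = Real.cos θ ^ 2 • (-X + ⟪X, ξ⟫ • ξ))) :
    ∀ X : V, X ∈ W → ⟪X, ξ⟫ = 0 →
      ‖(Submodule.orthogonalProjectionOnto W (φ X) : V)‖ = |Real.cos θ| * ‖φ X‖ :=
  slant_angle_constant_general ξ W φ hskew hmet θ hT
end
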